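/- arXiv:2201.02442 — 10 statements merged into one kernel-verified Lean document; each statement's English description precedes it below -/
import Mathlib

section
/- Let H be a complex Hilbert space and A, B bounded selfadjoint operators on H. If A maps the set C_B = {x ∈ H : ⟨Bx, x⟩ = 0} into nonnegative values (i.e. ⟨Ax, x⟩ ≥ 0 for all x with ⟨Bx, x⟩ = 0) and B is indefinite (there exist x₊, x₋ with ⟨Bx₊, x₊⟩ > 0 and ⟨Bx₋, x₋⟩ < 0), then there exists a real number ρ such that A + ρB is positive semidefinite. -/
/-!
Write `a x = re ⟪A x, x⟫` and `b x = re ⟪B x, x⟫`. Given `b x > 0 > b y`, rotate `y` by a unit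
`μ` that makes the `B`-cross term of `x` and `y` vanish and the `A`-cross term nonpositive, and
scale it so that `z = x + t μ y` satisfies `b z = 0`. Then `0 ≤ a z` yields
`a x * b y ≤ a y * b x`, i.e. every ratio `-a x / b x` with `b x > 0` lies below every ratio
`-a y / b y` with `b y < 0`. Indefiniteness of `B` makes both families nonempty, and any `ρ`
between them, e.g. the supremum of the first family, makes `a + ρ b` nonnegative.
-/

open scoped InnerProductSpace ComplexConjugate
open RCLike

theorem exists_forall_nonneg_add_mul_of_mul_le {X : Type*} {a b : X → ℝ}
    (hnull : ∀ x, b x = 0 → 0 ≤ a x)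
    (hcross : ∀ x y, 0 < b x → b y < 0 → a x * b y ≤ a y * b x)
    (hpos : ∃ x, 0 < b x) (hneg : ∃ y, b y < 0) :
    ∃ ρ : ℝ, ∀ x, 0 ≤ a x + ρ * b x := by
  set S := (fun x => -a x / b x) '' {x | 0 < b x}
  have hle : ∀ y, b y < 0 → ∀ r ∈ S, r ≤ -a y / b y := by
    rintro y hy _ ⟨x, hx, rfl⟩
    rw [div_le_iff₀ hx, div_mul_eq_mul_div, le_div_iff_of_neg hy]
    linarith [hcross x y hx hy]
  obtain ⟨x₀, hx₀⟩ := hpos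
  obtain ⟨y₀, hy₀⟩ := hneg
  refine ⟨sSup S, fun x => ?_⟩
  rcases lt_trichotomy (b x) 0 with hx | hx | hx
  · have := (le_div_iff_of_neg hx).1 (csSup_le ⟨_, x₀, hx₀, rfl⟩ (hle x hx) : sSup S ≤ _)
    linarith
  · simpa [hx] using hnull x hx
  · have := (div_le_iff₀ hx).1 (le_csSup ⟨_, hle y₀ hy₀⟩ ⟨x, hx, rfl⟩)
    linarith

theorem Complex.exists_norm_eq_one_re_mul_eq_zero (β : ℂ) :
    ∃ μ : ℂ, ‖μ‖ = 1 ∧ (μ * β).re = 0 := by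
  rcases eq_or_ne β 0 with rfl | hβ
  · exact ⟨1, by simp, by simp⟩
  · refine ⟨Complex.I * ‖β‖ / β, by simp [hβ], ?_⟩
    rw [div_mul_cancel₀ _ hβ]
    simp

theorem Complex.exists_norm_eq_one_re_mul_eq_zero_re_mul_nonpos (α β : ℂ) :
    ∃ μ : ℂ, ‖μ‖ = 1 ∧ (μ * β).re = 0 ∧ (μ * α).re ≤ 0 := by
  obtain ⟨μ, hμ, hμβ⟩ := Complex.exists_norm_eq_one_re_mul_eq_zero β
  rcases le_total (μ * α).re 0 with h | h
  · exact ⟨μ, hμ, hμβ, h⟩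
  · refine ⟨-μ, by rwa [norm_neg], by rw [neg_mul, Complex.neg_re, hμβ, neg_zero], ?_⟩
    rw [neg_mul, Complex.neg_re]
    exact neg_nonpos.2 h

namespace ContinuousLinearMap

section RCLike

variable {𝕜 E : Type*} [RCLike 𝕜] [NormedAddCommGroup E] [InnerProductSpace 𝕜 E]

theorem reApplyInnerSelf_add_smul_of_isSymmetric {T : E →L[𝕜] E}
    (hT : (T : E →ₗ[𝕜] E).IsSymmetric) (x y : E) (w : 𝕜) :
    T.reApplyInnerSelf (x + w • y) =
      T.reApplyInnerSelf x + ‖w‖ ^ 2 * T.reApplyInnerSelf y + 2 * re (w * ⟪T x, y⟫_𝕜) := by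
  have hexp : ⟪T (x + w • y), x + w • y⟫_𝕜 = ⟪T x, x⟫_𝕜 + ((‖w‖ ^ 2 : ℝ) : 𝕜) * ⟪T y, y⟫_𝕜
      + (w * ⟪T x, y⟫_𝕜 + conj (w * ⟪T x, y⟫_𝕜)) := by
    have hyx : ⟪T y, x⟫_𝕜 = conj ⟪T x, y⟫_𝕜 := (hT.conj_inner_sym x y).symm
    simp only [map_add, map_smul, inner_add_left, inner_add_right, inner_smul_left,
      inner_smul_right, map_mul, hyx]
    push_cast
    rw [← RCLike.conj_mul]
    ring
  rw [reApplyInnerSelf_apply, hexp, add_conj]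
  simp only [map_add, re_ofReal_mul, reApplyInnerSelf_apply]
  norm_cast

theorem reApplyInnerSelf_add_real_smul (S T : E →L[𝕜] E) (c : ℝ) (x : E) :
    (S + (c : 𝕜) • T).reApplyInnerSelf x = S.reApplyInnerSelf x + c * T.reApplyInnerSelf x := by
  simp [reApplyInnerSelf_apply, inner_add_left, inner_smul_left]

end RCLike

variable {E : Type*} [NormedAddCommGroup E] [InnerProductSpace ℂ E]

theorem reApplyInnerSelf_mul_le_of_nonneg_on_null {A B : E →L[ℂ] E}
    (hA : (A : E →ₗ[ℂ] E).IsSymmetric) (hB : (B : E →ₗ[ℂ] E).IsSymmetric)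
    (hnull : ∀ z, B.reApplyInnerSelf z = 0 → 0 ≤ A.reApplyInnerSelf z) {x y : E}
    (hx : 0 < B.reApplyInnerSelf x) (hy : B.reApplyInnerSelf y < 0) :
    A.reApplyInnerSelf x * B.reApplyInnerSelf y ≤ A.reApplyInnerSelf y * B.reApplyInnerSelf x := by
  obtain ⟨μ, hμ, hμB, hμA⟩ :=
    Complex.exists_norm_eq_one_re_mul_eq_zero_re_mul_nonpos ⟪A x, y⟫_ℂ ⟪B x, y⟫_ℂ
  set t := √(B.reApplyInnerSelf x / -B.reApplyInnerSelf y)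
  have ht : t ^ 2 * -B.reApplyInnerSelf y = B.reApplyInnerSelf x := by
    rw [Real.sq_sqrt (div_nonneg hx.le (neg_nonneg.2 hy.le)),
      div_mul_cancel₀ _ (neg_ne_zero.2 hy.ne)]
  have hw : ‖(t : ℂ) * μ‖ ^ 2 = t ^ 2 := by simp [hμ]
  have hcross (T : E →L[ℂ] E) :
      re ((t : ℂ) * μ * ⟪T x, y⟫_ℂ) = t * (μ * ⟪T x, y⟫_ℂ).re := by
    rw [mul_assoc]
    exact re_ofReal_mul _ _
  have hBz : B.reApplyInnerSelf (x + ((t : ℂ) * μ) • y) = 0 := by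
    rw [reApplyInnerSelf_add_smul_of_isSymmetric hB, hw, hcross, hμB]
    linear_combination -ht
  have hAz := hnull _ hBz
  rw [reApplyInnerSelf_add_smul_of_isSymmetric hA, hw, hcross] at hAz
  have hAcross : t * (μ * ⟪A x, y⟫_ℂ).re ≤ 0 :=
    mul_nonpos_of_nonneg_of_nonpos (Real.sqrt_nonneg _) hμA
  have hscaled :
      0 ≤ -B.reApplyInnerSelf y * (A.reApplyInnerSelf x + t ^ 2 * A.reApplyInnerSelf y) :=
    mul_nonneg (neg_nonneg.2 hy.le) (by linarith)
  rw [← ht]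
  linarith

end ContinuousLinearMap

/-- S-lemma for selfadjoint operators on a complex Hilbert space (Proposition 2.1). -/
theorem farkas_operator_version
    {H : Type*} [NormedAddCommGroup H] [InnerProductSpace ℂ H] [CompleteSpace H]
    (A B : H →L[ℂ] H) (hA : IsSelfAdjoint A) (hB : IsSelfAdjoint B)
    (hmap : ∀ x : H, ⟪B x, x⟫_ℂ = 0 → 0 ≤ (⟪A x, x⟫_ℂ).re)
    (hBpos : ∃ x : H, 0 < (⟪B x, x⟫_ℂ).re)
    (hBneg : ∃ x : H, (⟪B x, x⟫_ℂ).re < 0) :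
    ∃ ρ : ℝ, ∀ x : H, 0 ≤ (⟪(A + (ρ : ℂ) • B) x, x⟫_ℂ).re := by
  have hnull (x : H) (hx : B.reApplyInnerSelf x = 0) : 0 ≤ A.reApplyInnerSelf x := by
    refine hmap x ?_
    rw [← hB.isSymmetric.coe_reApplyInnerSelf_apply, hx, RCLike.ofReal_zero]
  obtain ⟨ρ, hρ⟩ := exists_forall_nonneg_add_mul_of_mul_le hnull
    (fun _ _ => ContinuousLinearMap.reApplyInnerSelf_mul_le_of_nonneg_on_null
      hA.isSymmetric hB.isSymmetric hnull) hBpos hBneg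
  exact ⟨ρ, fun x =>
    (hρ x).trans_eq (ContinuousLinearMap.reApplyInnerSelf_add_real_smul A B ρ x).symm⟩
end

section
/- Let H be a complex Hilbert space and A, B bounded selfadjoint operators on H with B indefinite. Suppose ⟨Ax, x⟩ ≥ 0 whenever ⟨Bx, x⟩ = 0. Define ρ₋ = −inf{⟨Ax,x⟩/⟨Bx,x⟩ : ⟨Bx,x⟩ > 0} and ρ₊ = −sup{⟨Ax,x⟩/⟨Bx,x⟩ : ⟨Bx,x⟩ < 0}. Then ρ₋ < +∞, ρ₊ > −∞, ρ₋ ≤ ρ₊, and for any real ρ, A + ρB is positive semidefinite if and only if ρ₋ ≤ ρ ≤ ρ₊. -/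
/-!
If `⟨Bx,x⟩ > 0 > ⟨By,y⟩`, the real quadratic `t ↦ ⟨B(x+ty), x+ty⟩` has roots `t₁ < 0 < t₂`,
at which `⟨A(x+ty), x+ty⟩ ≥ 0` by hypothesis. Subtracting the multiple of the `B`-quadratic that
kills the `t²` term of the `A`-quadratic leaves an affine function of `t` with a fixed sign at `t₁`
and `t₂`, hence at `t = 0`; this is `⟨Ay,y⟩/⟨By,y⟩ ≤ ⟨Ax,x⟩/⟨Bx,x⟩`. So every ratio on `P⁻(B)` lies
below every ratio on `P⁺(B)`, and sorting `x` by the sign of `⟨Bx,x⟩` shows that `A + ρB ≥ 0`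
exactly when `-ρ` separates the two sets of ratios.
-/

open scoped InnerProductSpace

theorem exists_neg_pos_roots_of_mul_neg {a b c : ℝ} (h : a * c < 0) :
    ∃ t₁ t₂ : ℝ, t₁ < 0 ∧ 0 < t₂ ∧ a * t₁ ^ 2 + b * t₁ + c = 0 ∧ a * t₂ ^ 2 + b * t₂ + c = 0 := by
  have ha : a ≠ 0 := by rintro rfl; simp at h
  set s := √(b ^ 2 - 4 * a * c)
  have hs : s ^ 2 = b ^ 2 - 4 * a * c := Real.sq_sqrt (by nlinarith [sq_nonneg b])
  set r : ℝ → ℝ := fun ε ↦ (-b + ε * s) / (2 * a)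
  have root (ε : ℝ) (hε : ε ^ 2 = 1) : a * r ε ^ 2 + b * r ε + c = 0 := by
    simp only [r]
    field_simp
    linear_combination s ^ 2 * hε + hs
  have vieta : r 1 * r (-1) * a ^ 2 = a * c := by
    simp only [r]
    field_simp
    linear_combination -hs
  have hprod : r 1 * r (-1) < 0 := by nlinarith [sq_pos_of_ne_zero ha]
  rcases mul_neg_iff.mp hprod with ⟨h₁, h₂⟩ | ⟨h₁, h₂⟩
  · exact ⟨_, _, h₂, h₁, root (-1) (by norm_num), root 1 (by norm_num)⟩
  · exact ⟨_, _, h₁, h₂, root 1 (by norm_num), root (-1) (by norm_num)⟩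

theorem div_le_div_of_nonneg_at_roots {a b c a' b' c' : ℝ} (ha : a < 0) (hc : 0 < c)
    (hroots : ∀ t : ℝ, a * t ^ 2 + b * t + c = 0 → 0 ≤ a' * t ^ 2 + b' * t + c') :
    a' / a ≤ c' / c := by
  obtain ⟨t₁, t₂, ht₁, ht₂, hp₁, hp₂⟩ :=
    exists_neg_pos_roots_of_mul_neg (mul_neg_of_neg_of_pos ha hc)
  set g : ℝ → ℝ := fun t ↦ (a * b' - a' * b) * t + (a * c' - a' * c)
  have hg (t : ℝ) (ht : a * t ^ 2 + b * t + c = 0) : g t ≤ 0 := by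
    have := mul_nonpos_of_nonpos_of_nonneg ha.le (hroots t ht)
    simp only [g]
    linear_combination this - a' * ht
  have hg₀ : g 0 ≤ 0 := by
    have haffine : t₂ * g t₁ + (-t₁) * g t₂ = (t₂ - t₁) * g 0 := by simp only [g]; ring
    have := add_nonpos (mul_nonpos_of_nonneg_of_nonpos ht₂.le (hg t₁ hp₁))
      (mul_nonpos_of_nonneg_of_nonpos (neg_nonneg.mpr ht₁.le) (hg t₂ hp₂))
    exact nonpos_of_mul_nonpos_right (haffine ▸ this) (by linarith)
  rw [← neg_div_neg_eq, div_le_div_iff₀ (neg_pos.mpr ha) hc]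
  simp only [g] at hg₀
  linarith

section
variable {H : Type*} [NormedAddCommGroup H] [InnerProductSpace ℂ H]

theorem re_inner_map_add_smul_self (T : H →L[ℂ] H) (x y : H) (t : ℝ) :
    (⟪T (x + (t : ℂ) • y), x + (t : ℂ) • y⟫_ℂ).re =
      (⟪T y, y⟫_ℂ).re * t ^ 2 + ((⟪T y, x⟫_ℂ).re + (⟪T x, y⟫_ℂ).re) * t + (⟪T x, x⟫_ℂ).re := by
  simp only [map_add, map_smul, inner_add_left, inner_add_right, inner_smul_left,
    inner_smul_right, Complex.conj_ofReal, Complex.add_re, Complex.re_ofReal_mul]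
  ring

theorem re_inner_add_smul_apply_self (A B : H →L[ℂ] H) (ρ : ℝ) (x : H) :
    (⟪(A + (ρ : ℂ) • B) x, x⟫_ℂ).re = (⟪A x, x⟫_ℂ).re + ρ * (⟪B x, x⟫_ℂ).re := by
  simp only [add_apply, smul_apply, inner_add_left,
    inner_smul_left, Complex.conj_ofReal, Complex.add_re, Complex.re_ofReal_mul]

theorem LinearMap.IsSymmetric.inner_apply_self_eq_zero {B : H →ₗ[ℂ] H} (hB : B.IsSymmetric)
    {x : H} (h : (⟪B x, x⟫_ℂ).re = 0) : ⟪B x, x⟫_ℂ = 0 :=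
  Complex.ext h (hB.im_inner_apply_self x)

/-- In the paper's notation, `ρ₋ = -sInf (posRatios A B)`. -/
def posRatios (A B : H →L[ℂ] H) : Set ℝ :=
  {r | ∃ x : H, 0 < (⟪B x, x⟫_ℂ).re ∧ r = (⟪A x, x⟫_ℂ).re / (⟪B x, x⟫_ℂ).re}

/-- In the paper's notation, `ρ₊ = -sSup (negRatios A B)`. -/
def negRatios (A B : H →L[ℂ] H) : Set ℝ :=
  {r | ∃ x : H, (⟪B x, x⟫_ℂ).re < 0 ∧ r = (⟪A x, x⟫_ℂ).re / (⟪B x, x⟫_ℂ).re}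

variable {A B : H →L[ℂ] H} (hB : (B : H →ₗ[ℂ] H).IsSymmetric)
  (hmap : ∀ x : H, ⟪B x, x⟫_ℂ = 0 → 0 ≤ (⟪A x, x⟫_ℂ).re)
include hB hmap

theorem le_of_mem_negRatios_of_mem_posRatios {r r' : ℝ} (hr : r ∈ negRatios A B)
    (hr' : r' ∈ posRatios A B) : r ≤ r' := by
  obtain ⟨y, hy, rfl⟩ := hr
  obtain ⟨x, hx, rfl⟩ := hr'
  refine div_le_div_of_nonneg_at_roots (b := (⟪B y, x⟫_ℂ).re + (⟪B x, y⟫_ℂ).re)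
    (b' := (⟪A y, x⟫_ℂ).re + (⟪A x, y⟫_ℂ).re) hy hx fun t ht ↦ ?_
  rw [← re_inner_map_add_smul_self] at ht ⊢
  exact hmap _ (hB.inner_apply_self_eq_zero ht)

theorem nonneg_re_inner_add_smul_apply_self_iff (ρ : ℝ) :
    (∀ x : H, 0 ≤ (⟪(A + (ρ : ℂ) • B) x, x⟫_ℂ).re) ↔
      (∀ r ∈ posRatios A B, -ρ ≤ r) ∧ ∀ r ∈ negRatios A B, r ≤ -ρ := by
  simp only [re_inner_add_smul_apply_self, posRatios, negRatios]
  refine ⟨fun h ↦ ⟨?_, ?_⟩, fun ⟨hpos, hneg⟩ x ↦ ?_⟩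
  · rintro _ ⟨x, hx, rfl⟩
    rw [le_div_iff₀ hx]
    linarith [h x]
  · rintro _ ⟨x, hx, rfl⟩
    rw [div_le_iff_of_neg hx]
    linarith [h x]
  · rcases lt_trichotomy (⟪B x, x⟫_ℂ).re 0 with hx | hx | hx
    · have := hneg _ ⟨x, hx, rfl⟩
      rw [div_le_iff_of_neg hx] at this
      linarith
    · rw [hx, mul_zero, add_zero]
      exact hmap x (hB.inner_apply_self_eq_zero hx)
    · have := hpos _ ⟨x, hx, rfl⟩
      rw [le_div_iff₀ hx] at this
      linarith

end

theorem admissible_interval_general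
    {H : Type*} [NormedAddCommGroup H] [InnerProductSpace ℂ H] [CompleteSpace H]
    (A B : H →L[ℂ] H) (hB : IsSelfAdjoint B)
    (hBpos : ∃ x : H, 0 < (⟪B x, x⟫_ℂ).re)
    (hBneg : ∃ x : H, (⟪B x, x⟫_ℂ).re < 0)
    (hmap : ∀ x : H, ⟪B x, x⟫_ℂ = 0 → 0 ≤ (⟪A x, x⟫_ℂ).re) :
    BddBelow {r : ℝ | ∃ x : H, 0 < (⟪B x, x⟫_ℂ).re ∧
        r = (⟪A x, x⟫_ℂ).re / (⟪B x, x⟫_ℂ).re} ∧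
    BddAbove {r : ℝ | ∃ x : H, (⟪B x, x⟫_ℂ).re < 0 ∧
        r = (⟪A x, x⟫_ℂ).re / (⟪B x, x⟫_ℂ).re} ∧
    -sInf {r : ℝ | ∃ x : H, 0 < (⟪B x, x⟫_ℂ).re ∧
        r = (⟪A x, x⟫_ℂ).re / (⟪B x, x⟫_ℂ).re} ≤
      -sSup {r : ℝ | ∃ x : H, (⟪B x, x⟫_ℂ).re < 0 ∧
        r = (⟪A x, x⟫_ℂ).re / (⟪B x, x⟫_ℂ).re} ∧
    ∀ ρ : ℝ, (∀ x : H, 0 ≤ (⟪(A + (ρ : ℂ) • B) x, x⟫_ℂ).re) ↔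
      (-sInf {r : ℝ | ∃ x : H, 0 < (⟪B x, x⟫_ℂ).re ∧
          r = (⟪A x, x⟫_ℂ).re / (⟪B x, x⟫_ℂ).re} ≤ ρ ∧
        ρ ≤ -sSup {r : ℝ | ∃ x : H, (⟪B x, x⟫_ℂ).re < 0 ∧
          r = (⟪A x, x⟫_ℂ).re / (⟪B x, x⟫_ℂ).re}) := by
  change BddBelow (posRatios A B) ∧ BddAbove (negRatios A B) ∧
    -sInf (posRatios A B) ≤ -sSup (negRatios A B) ∧ ∀ ρ : ℝ, _ ↔
      (-sInf (posRatios A B) ≤ ρ ∧ ρ ≤ -sSup (negRatios A B))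
  have hle : ∀ {r r'}, r ∈ negRatios A B → r' ∈ posRatios A B → r ≤ r' :=
    le_of_mem_negRatios_of_mem_posRatios hB.isSymmetric hmap
  obtain ⟨x₀, hx₀⟩ := hBpos
  obtain ⟨y₀, hy₀⟩ := hBneg
  have hP : (posRatios A B).Nonempty := ⟨_, x₀, hx₀, rfl⟩
  have hN : (negRatios A B).Nonempty := ⟨_, y₀, hy₀, rfl⟩
  have hPb : BddBelow (posRatios A B) := ⟨_, fun _ ↦ hle hN.some_mem⟩
  have hNb : BddAbove (negRatios A B) := ⟨_, fun _ hr ↦ hle hr hP.some_mem⟩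
  refine ⟨hPb, hNb, neg_le_neg (csSup_le hN fun _ hr ↦ le_csInf hP fun _ ↦ hle hr), fun ρ ↦ ?_⟩
  rw [nonneg_re_inner_add_smul_apply_self_iff hB.isSymmetric hmap, neg_le, le_neg,
    le_csInf_iff hPb hP, csSup_le_iff hNb hN]

/-- Corollary 2.2: the interval of admissible parameters `ρ` for which `A + ρB` is
positive semidefinite is `[ρ₋, ρ₊]`, where
`ρ₋ = -inf { ⟨Ax,x⟩/⟨Bx,x⟩ : ⟨Bx,x⟩ > 0 }` and `ρ₊ = -sup { ⟨Ax,x⟩/⟨Bx,x⟩ : ⟨Bx,x⟩ < 0 }`. -/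
theorem admissible_interval
    {H : Type*} [NormedAddCommGroup H] [InnerProductSpace ℂ H] [CompleteSpace H]
    (A B : H →L[ℂ] H) (hA : IsSelfAdjoint A) (hB : IsSelfAdjoint B)
    (hBpos : ∃ x : H, 0 < (⟪B x, x⟫_ℂ).re)
    (hBneg : ∃ x : H, (⟪B x, x⟫_ℂ).re < 0)
    (hmap : ∀ x : H, ⟪B x, x⟫_ℂ = 0 → 0 ≤ (⟪A x, x⟫_ℂ).re) :
    BddBelow {r : ℝ | ∃ x : H, 0 < (⟪B x, x⟫_ℂ).re ∧
        r = (⟪A x, x⟫_ℂ).re / (⟪B x, x⟫_ℂ).re} ∧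
    BddAbove {r : ℝ | ∃ x : H, (⟪B x, x⟫_ℂ).re < 0 ∧
        r = (⟪A x, x⟫_ℂ).re / (⟪B x, x⟫_ℂ).re} ∧
    -sInf {r : ℝ | ∃ x : H, 0 < (⟪B x, x⟫_ℂ).re ∧
        r = (⟪A x, x⟫_ℂ).re / (⟪B x, x⟫_ℂ).re} ≤
      -sSup {r : ℝ | ∃ x : H, (⟪B x, x⟫_ℂ).re < 0 ∧
        r = (⟪A x, x⟫_ℂ).re / (⟪B x, x⟫_ℂ).re} ∧
    ∀ ρ : ℝ, (∀ x : H, 0 ≤ (⟪(A + (ρ : ℂ) • B) x, x⟫_ℂ).re) ↔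
      (-sInf {r : ℝ | ∃ x : H, 0 < (⟪B x, x⟫_ℂ).re ∧
          r = (⟪A x, x⟫_ℂ).re / (⟪B x, x⟫_ℂ).re} ≤ ρ ∧
        ρ ≤ -sSup {r : ℝ | ∃ x : H, (⟪B x, x⟫_ℂ).re < 0 ∧
          r = (⟪A x, x⟫_ℂ).re / (⟪B x, x⟫_ℂ).re}) :=
  admissible_interval_general A B hB hBpos hBneg hmap
end

section
/- Let H be a Hilbert space, K and E Krein spaces, T : H → K and V : H → E bounded operators such that T(C_V) is a nonnegative set of K, where C_V = {y : [Vy,Vy] = 0}. Given w₀ ∈ K and z₀ ∈ E, suppose x̃ ∈ H satisfies T^#T x̃ = T^# w₀ and V x̃ = z₀, where T^# denotes the Krein-space adjoint. Then x̃ minimizes [Tx − w₀, Tx − w₀] over the set {x : [Vx − z₀, Vx − z₀] = 0}, and the set of all minimizers equals x̃ + (C_T ∩ C_V), where C_T = {y : [Ty,Ty] = 0}. -/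
open scoped InnerProductSpace

/-- Lemma 3.4: if `x̃` satisfies the unconstrained normal equation `T^#T x̃ = T^# w₀`
together with the exact constraint `V x̃ = z₀`, then `x̃` minimizes
`[Tx - w₀, Tx - w₀]` over `{x : [Vx - z₀, Vx - z₀] = 0}`, and the set of minimizers is
`x̃ + (C_T ∩ C_V)`.  The Krein spaces `K`, `E` are modeled as Hilbert spaces equipped with
bounded selfadjoint Gram operators `JK`, `JE`, so that `T^# = T* ∘ JK`. -/
theorem exact_solution_normal_equation
    {H K E : Type*} [NormedAddCommGroup H] [InnerProductSpace ℂ H] [CompleteSpace H]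
    [NormedAddCommGroup K] [InnerProductSpace ℂ K] [CompleteSpace K]
    [NormedAddCommGroup E] [InnerProductSpace ℂ E] [CompleteSpace E]
    (JK : K →L[ℂ] K) (hJK : IsSelfAdjoint JK)
    (JE : E →L[ℂ] E) (hJE : IsSelfAdjoint JE)
    (T : H →L[ℂ] K) (V : H →L[ℂ] E)
    (hnn : ∀ y : H, ⟪JE (V y), V y⟫_ℂ = 0 → 0 ≤ (⟪JK (T y), T y⟫_ℂ).re)
    (w₀ : K) (z₀ : E) (xt : H)
    (hnormal : (ContinuousLinearMap.adjoint T) (JK (T xt))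
      = (ContinuousLinearMap.adjoint T) (JK w₀))
    (hconstr : V xt = z₀) :
    (∀ x : H, ⟪JE (V x - z₀), V x - z₀⟫_ℂ = 0 →
        (⟪JK (T xt - w₀), T xt - w₀⟫_ℂ).re ≤ (⟪JK (T x - w₀), T x - w₀⟫_ℂ).re) ∧
    {x : H | ⟪JE (V x - z₀), V x - z₀⟫_ℂ = 0 ∧
        (⟪JK (T x - w₀), T x - w₀⟫_ℂ).re = (⟪JK (T xt - w₀), T xt - w₀⟫_ℂ).re}
      = {x : H | ∃ y : H, ⟪JK (T y), T y⟫_ℂ = 0 ∧ ⟪JE (V y), V y⟫_ℂ = 0 ∧ x = xt + y} := by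
  classical
  have hsym : ∀ u v : K, ⟪JK u, v⟫_ℂ = ⟪u, JK v⟫_ℂ :=
    (ContinuousLinearMap.isSelfAdjoint_iff_isSymmetric.mp hJK)
  -- the quadratic form of JK is real-valued
  have hreal : ∀ u : K, (⟪JK u, u⟫_ℂ).im = 0 := by
    intro u
    have : ⟪JK u, u⟫_ℂ = (starRingEnd ℂ) ⟪JK u, u⟫_ℂ := by
      conv_lhs => rw [hsym u u, ← inner_conj_symm]
    have h2 := congrArg Complex.im this
    rw [Complex.conj_im] at h2
    linarith
  -- residual orthogonality from the normal equation
  have hker : ∀ y : H, ⟪JK (T xt - w₀), T y⟫_ℂ = 0 := by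
    intro y
    have h0 : (ContinuousLinearMap.adjoint T) (JK (T xt - w₀)) = 0 := by
      rw [map_sub, map_sub, hnormal, sub_self]
    calc ⟪JK (T xt - w₀), T y⟫_ℂ
        = ⟪(ContinuousLinearMap.adjoint T) (JK (T xt - w₀)), y⟫_ℂ := by
          rw [ContinuousLinearMap.adjoint_inner_left]
      _ = 0 := by rw [h0, inner_zero_left]
  have hker' : ∀ y : H, ⟪JK (T y), T xt - w₀⟫_ℂ = 0 := by
    intro y
    rw [hsym, ← inner_conj_symm, hker, map_zero]
  -- key expansion of the objective
  have key : ∀ y : H, ⟪JK (T (xt + y) - w₀), T (xt + y) - w₀⟫_ℂ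
      = ⟪JK (T xt - w₀), T xt - w₀⟫_ℂ + ⟪JK (T y), T y⟫_ℂ := by
    intro y
    have h1 : T (xt + y) - w₀ = (T xt - w₀) + T y := by rw [map_add]; abel
    rw [h1, map_add, inner_add_left, inner_add_right, inner_add_right,
      hker y, hker' y]
    ring
  -- constraint reduction
  have hcon : ∀ y : H, ⟪JE (V (xt + y) - z₀), V (xt + y) - z₀⟫_ℂ = ⟪JE (V y), V y⟫_ℂ := by
    intro y
    have : V (xt + y) - z₀ = V y := by rw [map_add, hconstr]; abel
    rw [this]
  constructor
  · intro x hx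
    have hx' : x = xt + (x - xt) := by abel
    have hcv : ⟪JE (V (x - xt)), V (x - xt)⟫_ℂ = 0 := by
      rw [← hcon (x - xt), ← hx']; exact hx
    have := hnn (x - xt) hcv
    have hk := key (x - xt)
    rw [← hx'] at hk
    rw [hk, Complex.add_re]
    linarith
  · ext x
    simp only [Set.mem_setOf_eq]
    constructor
    · rintro ⟨hx, heq⟩
      refine ⟨x - xt, ?_, ?_, by abel⟩
      · have hx' : x = xt + (x - xt) := by abel
        have hk := key (x - xt)
        rw [← hx'] at hk
        have hre : (⟪JK (T (x - xt)), T (x - xt)⟫_ℂ).re = 0 := by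
          have := congrArg Complex.re hk
          rw [Complex.add_re] at this
          linarith
        exact Complex.ext hre (hreal _)
      · have hx' : x = xt + (x - xt) := by abel
        rw [← hcon (x - xt), ← hx']; exact hx
    · rintro ⟨y, hct, hcv, rfl⟩
      refine ⟨by rw [hcon y]; exact hcv, ?_⟩
      rw [key y, Complex.add_re, hct]
      simp
end

section
/- Let H be a complex Hilbert space and G a bounded selfadjoint operator on H. Suppose u₀ ∈ H with G u₀ ≠ 0, and suppose there exist γ₁, γ₂ ∈ ℝ and y₁, y₂ ∈ H with ⟨G y₁, y₁⟩ = 0, ⟨G y₂, y₂⟩ = 0, (I + γ₁ G) y₁ = u₀, (I + γ₂ G) y₂ = u₀, and both I + γ₁ G and I + γ₂ G are positive semidefinite. Then γ₁ = γ₂. -/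
open scoped InnerProductSpace

/-- Proposition 5.1: uniqueness of the multiplier `γ` in the normal equation
`(I + γG)y = u₀` with `y ∈ Q(G)` and `I + γG` positive semidefinite, when `u₀ ∉ N(G)`. -/
theorem multiplier_unique
    {H : Type*} [NormedAddCommGroup H] [InnerProductSpace ℂ H] [CompleteSpace H]
    (G : H →L[ℂ] H) (hG : IsSelfAdjoint G)
    (u₀ : H) (hu : G u₀ ≠ 0)
    (γ₁ γ₂ : ℝ) (y₁ y₂ : H)
    (hy₁ : ⟪G y₁, y₁⟫_ℂ = 0) (hy₂ : ⟪G y₂, y₂⟫_ℂ = 0)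
    (he₁ : ((1 : H →L[ℂ] H) + (γ₁ : ℂ) • G) y₁ = u₀)
    (he₂ : ((1 : H →L[ℂ] H) + (γ₂ : ℂ) • G) y₂ = u₀)
    (hp₁ : ∀ x : H, 0 ≤ (⟪((1 : H →L[ℂ] H) + (γ₁ : ℂ) • G) x, x⟫_ℂ).re)
    (hp₂ : ∀ x : H, 0 ≤ (⟪((1 : H →L[ℂ] H) + (γ₂ : ℂ) • G) x, x⟫_ℂ).re) :
    γ₁ = γ₂ := by
  by_contra hne
  have hγ : (γ₂ : ℝ) - γ₁ ≠ 0 := sub_ne_zero.mpr (Ne.symm hne)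
  simp only [ContinuousLinearMap.add_apply, ContinuousLinearMap.smul_apply,
    ContinuousLinearMap.one_apply] at he₁ he₂ hp₁ hp₂
  set d := y₁ - y₂ with hd
  set a := ⟪G y₁, y₂⟫_ℂ with ha
  have hsym : ⟪G y₂, y₁⟫_ℂ = starRingEnd ℂ a := by
    calc ⟪G y₂, y₁⟫_ℂ = ⟪y₂, G y₁⟫_ℂ := hG.isSymmetric y₂ y₁
    _ = starRingEnd ℂ a := by rw [← inner_conj_symm, ha]
  have h1d : ⟪G y₁, d⟫_ℂ = -a := by
    rw [hd, inner_sub_right, hy₁, ← ha]; ring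
  have h2d : ⟪G y₂, d⟫_ℂ = starRingEnd ℂ a := by
    rw [hd, inner_sub_right, hy₂, hsym]; ring
  have key : y₁ + (γ₁ : ℂ) • G y₁ = y₂ + (γ₂ : ℂ) • G y₂ := by rw [he₁, he₂]
  have hA1d : d + (γ₁ : ℂ) • G d = ((γ₂ - γ₁ : ℝ) : ℂ) • G y₂ := by
    calc d + (γ₁ : ℂ) • G d
        = (y₁ + (γ₁ : ℂ) • G y₁) - (y₂ + (γ₂ : ℂ) • G y₂)
            + ((γ₂ : ℂ) • G y₂ - (γ₁ : ℂ) • G y₂) := by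
          rw [hd, map_sub, smul_sub]; abel
      _ = ((γ₂ - γ₁ : ℝ) : ℂ) • G y₂ := by rw [key]; push_cast [sub_smul]; abel
  have hA2d : d + (γ₂ : ℂ) • G d = ((γ₂ - γ₁ : ℝ) : ℂ) • G y₁ := by
    calc d + (γ₂ : ℂ) • G d
        = (y₁ + (γ₁ : ℂ) • G y₁) - (y₂ + (γ₂ : ℂ) • G y₂)
            + ((γ₂ : ℂ) • G y₁ - (γ₁ : ℂ) • G y₁) := by
          rw [hd, map_sub, smul_sub]; abel
      _ = ((γ₂ - γ₁ : ℝ) : ℂ) • G y₁ := by rw [key]; push_cast [sub_smul]; abel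
  have hr1 : (⟪d + (γ₁ : ℂ) • G d, d⟫_ℂ).re = (γ₂ - γ₁) * a.re := by
    rw [hA1d, inner_smul_left, h2d]
    simp [Complex.ofReal_sub]
  have hr2 : (⟪d + (γ₂ : ℂ) • G d, d⟫_ℂ).re = -((γ₂ - γ₁) * a.re) := by
    rw [hA2d, inner_smul_left, h1d]
    simp [Complex.ofReal_sub]
  have hp1d := hp₁ d
  have hp2d := hp₂ d
  rw [hr1] at hp1d
  rw [hr2] at hp2d
  have hare : a.re = 0 := by
    have : (γ₂ - γ₁) * a.re = 0 := le_antisymm (by linarith) hp1d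
    exact (mul_eq_zero.mp this).resolve_left hγ
  have hGdd : (⟪G d, d⟫_ℂ).re = 0 := by
    rw [hd, map_sub, inner_sub_left, inner_sub_right, inner_sub_right, hy₁, hy₂, hsym, ← ha]
    simp [hare]
  have hdd : (⟪d, d⟫_ℂ).re = 0 := by
    have h := hr1
    rw [inner_add_left, inner_smul_left, Complex.add_re] at h
    have h2 : ((starRingEnd ℂ) (γ₁ : ℂ) * ⟪G d, d⟫_ℂ).re = 0 := by
      simp [Complex.mul_re, hGdd]
    rw [h2, hare] at h
    linarith
  have hd0 : d = 0 := by
    have hn : ‖d‖ ^ 2 = 0 := by rw [← inner_self_eq_norm_sq (𝕜 := ℂ) d]; exact hdd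
    have : ‖d‖ = 0 := by nlinarith [norm_nonneg d]
    exact norm_eq_zero.mp this
  have hyy : y₁ = y₂ := sub_eq_zero.mp hd0
  rw [← hyy] at he₂
  have heq : y₁ + (γ₁ : ℂ) • G y₁ = y₁ + (γ₂ : ℂ) • G y₁ := he₁.trans he₂.symm
  have hG0 : G y₁ = 0 := by
    have h3 : ((γ₁ : ℂ) - γ₂) • G y₁ = 0 := by
      rw [add_right_inj] at heq
      rw [sub_smul, heq]; abel
    rcases smul_eq_zero.mp h3 with h | h
    · exact absurd (by exact_mod_cast sub_eq_zero.mp h) hne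
    · exact h
  have hu₀ : u₀ = y₁ := by rw [← he₁, hG0]; simp
  rw [hu₀] at hu
  exact hu hG0
end

section
/- Let H be a complex Hilbert space, G a bounded selfadjoint operator, and u₀ ∉ N(G). Suppose γ₁, γ₂ ∈ [−κ, κ] (where I + γG is positive semidefinite for all γ ∈ [−κ, κ]) and y₁, y₂ ∈ Q(G) = {x : ⟨Gx,x⟩ = 0} satisfy (I + γᵢ G) yᵢ = u₀ for i = 1, 2. Then ‖y₁‖ = ‖y₂‖. -/
open scoped InnerProductSpace

/-- Cauchy–Schwarz inequality for a positive semidefinite selfadjoint operator. -/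
lemma cs_pos_op {H : Type*} [NormedAddCommGroup H] [InnerProductSpace ℂ H] [CompleteSpace H]
    (T : H →L[ℂ] H) (hT : IsSelfAdjoint T)
    (hpos : ∀ x : H, 0 ≤ (⟪T x, x⟫_ℂ).re) (x y : H) :
    (⟪T x, y⟫_ℂ).re ^ 2 ≤ (⟪T x, x⟫_ℂ).re * (⟪T y, y⟫_ℂ).re := by
  have hsym : (⟪T y, x⟫_ℂ).re = (⟪T x, y⟫_ℂ).re := by
    have h1 : ⟪T y, x⟫_ℂ = ⟪y, T x⟫_ℂ := hT.isSymmetric y x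
    rw [h1, ← inner_conj_symm (T x) y, Complex.conj_re]
  have key : ∀ t : ℝ, 0 ≤ (⟪T x, x⟫_ℂ).re * (t * t) + (2 * (⟪T x, y⟫_ℂ).re) * t
      + (⟪T y, y⟫_ℂ).re := by
    intro t
    have h0 := hpos ((t : ℂ) • x + y)
    have hexp : ⟪T ((t : ℂ) • x + y), (t : ℂ) • x + y⟫_ℂ
        = (t : ℂ) * ((t : ℂ) * ⟪T x, x⟫_ℂ) + (t : ℂ) * ⟪T x, y⟫_ℂ
          + (t : ℂ) * ⟪T y, x⟫_ℂ + ⟪T y, y⟫_ℂ := by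
      rw [map_add, map_smul]
      simp only [inner_add_left, inner_add_right, inner_smul_left, inner_smul_right,
        Complex.conj_ofReal]
      ring
    rw [hexp] at h0
    simp only [Complex.add_re, Complex.re_ofReal_mul] at h0
    rw [hsym] at h0
    nlinarith [h0]
  have hd := discrim_le_zero key
  rw [discrim] at hd
  nlinarith [hd]

/-- Key step in Proposition 5.1: two solutions of the normal equation (with possibly
different admissible multipliers) have the same norm. -/
theorem solutions_same_norm
    {H : Type*} [NormedAddCommGroup H] [InnerProductSpace ℂ H] [CompleteSpace H]
    (G : H →L[ℂ] H) (hG : IsSelfAdjoint G)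
    (κ : ℝ) (hκ : 0 < κ)
    (hpsd : ∀ γ ∈ Set.Icc (-κ) κ,
      ∀ x : H, 0 ≤ (⟪((1 : H →L[ℂ] H) + (γ : ℂ) • G) x, x⟫_ℂ).re)
    (u₀ : H) (hu : G u₀ ≠ 0)
    (γ₁ γ₂ : ℝ) (hγ₁ : γ₁ ∈ Set.Icc (-κ) κ) (hγ₂ : γ₂ ∈ Set.Icc (-κ) κ)
    (y₁ y₂ : H)
    (hy₁ : ⟪G y₁, y₁⟫_ℂ = 0) (hy₂ : ⟪G y₂, y₂⟫_ℂ = 0)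
    (he₁ : ((1 : H →L[ℂ] H) + (γ₁ : ℂ) • G) y₁ = u₀)
    (he₂ : ((1 : H →L[ℂ] H) + (γ₂ : ℂ) • G) y₂ = u₀) :
    ‖y₁‖ = ‖y₂‖ := by
  set T₁ := (1 : H →L[ℂ] H) + (γ₁ : ℂ) • G with hT₁def
  set T₂ := (1 : H →L[ℂ] H) + (γ₂ : ℂ) • G with hT₂def
  have hsa : ∀ γ : ℝ, IsSelfAdjoint ((1 : H →L[ℂ] H) + (γ : ℂ) • G) := by
    intro γ
    have : star ((1 : H →L[ℂ] H) + (γ : ℂ) • G) = 1 + (γ : ℂ) • G := by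
      rw [star_add, star_one, star_smul, hG.star_eq, RCLike.star_def, Complex.conj_ofReal]
    exact this
  -- diagonal values
  have diag : ∀ (γ : ℝ) (y : H), ⟪G y, y⟫_ℂ = 0 →
      (⟪((1 : H →L[ℂ] H) + (γ : ℂ) • G) y, y⟫_ℂ).re = ‖y‖ ^ 2 := by
    intro γ y hy
    simp only [ContinuousLinearMap.add_apply, ContinuousLinearMap.one_apply,
      ContinuousLinearMap.smul_apply, inner_add_left, inner_smul_left, hy, mul_zero, add_zero]
    rw [← inner_self_eq_norm_sq (𝕜 := ℂ)]
    rfl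
  have d11 : (⟪T₁ y₁, y₁⟫_ℂ).re = ‖y₁‖ ^ 2 := diag γ₁ y₁ hy₁
  have d12 : (⟪T₁ y₂, y₂⟫_ℂ).re = ‖y₂‖ ^ 2 := diag γ₁ y₂ hy₂
  have d22 : (⟪T₂ y₂, y₂⟫_ℂ).re = ‖y₂‖ ^ 2 := diag γ₂ y₂ hy₂
  have d21 : (⟪T₂ y₁, y₁⟫_ℂ).re = ‖y₁‖ ^ 2 := diag γ₂ y₁ hy₁
  -- cross terms
  have c1 : (⟪T₁ y₁, y₂⟫_ℂ).re = ‖y₂‖ ^ 2 := by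
    rw [he₁, ← he₂, d22]
  have c2 : (⟪T₂ y₂, y₁⟫_ℂ).re = ‖y₁‖ ^ 2 := by
    rw [he₂, ← he₁, d11]
  have cs1 := cs_pos_op T₁ (hsa γ₁) (hpsd γ₁ hγ₁) y₁ y₂
  have cs2 := cs_pos_op T₂ (hsa γ₂) (hpsd γ₂ hγ₂) y₂ y₁
  rw [c1, d11, d12] at cs1
  rw [c2, d22, d21] at cs2
  have hsq : ‖y₁‖ ^ 2 = ‖y₂‖ ^ 2 := by
    have h1 : ‖y₁‖ ^ 2 ≤ ‖y₂‖ ^ 2 := by nlinarith [cs2, sq_nonneg (‖y₁‖ ^ 2 - ‖y₂‖ ^ 2)]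
    have h2 : ‖y₂‖ ^ 2 ≤ ‖y₁‖ ^ 2 := by nlinarith [cs1, sq_nonneg (‖y₁‖ ^ 2 - ‖y₂‖ ^ 2)]
    linarith
  rw [← Real.sqrt_sq (norm_nonneg y₁), ← Real.sqrt_sq (norm_nonneg y₂), hsq]
end

section
/- Let H be a complex Hilbert space, G a bounded positive definite operator with ‖G‖ = 1/κ, and u ∈ H. If the family of vectors xₙ = (I − (κ − 1/n) G)⁻¹ u, n ∈ ℕ, is bounded in norm, then u belongs to the range of I − κG. -/
/-!
For large `n` the Neumann series solves `(I - (κ - 1/(n+1)) G) xₙ = u`. These `xₙ` lie in a ball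
of radius `M`, and `(I - κG) xₙ = u - (1/(n+1)) G xₙ → u`, so `u` is in the closure of the image
of that ball under `I - κG`. This image is closed because a bounded linear map sends closed balls
of a Hilbert space to closed sets: a decreasing sequence of nonempty bounded closed convex sets has
a common point, since their minimal-norm points have increasing norms and, by the projection
inequality, form a Cauchy sequence.
-/

open scoped InnerProductSpace
open Filter Topology Metric

theorem cauchySeq_of_norm_sub_sq_le {E : Type*} [SeminormedAddCommGroup E] {x : ℕ → E} {M : ℝ}
    (hM : ∀ n, ‖x n‖ ≤ M) (hx : ∀ n k, n ≤ k → ‖x k - x n‖ ^ 2 ≤ ‖x k‖ ^ 2 - ‖x n‖ ^ 2) :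
    CauchySeq x := by
  have hmono : Monotone fun n => ‖x n‖ ^ 2 := fun n k hnk => by
    nlinarith [hx n k hnk, sq_nonneg ‖x k - x n‖]
  have hbdd : BddAbove (Set.range fun n => ‖x n‖ ^ 2) :=
    ⟨M ^ 2, by rintro _ ⟨n, rfl⟩; exact pow_le_pow_left₀ (norm_nonneg _) (hM n) 2⟩
  have hcauchy := (tendsto_atTop_ciSup hmono hbdd).cauchySeq
  rw [Metric.cauchySeq_iff'] at hcauchy ⊢
  intro ε hε
  obtain ⟨N, hN⟩ := hcauchy (ε ^ 2) (by positivity)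
  refine ⟨N, fun k hk => ?_⟩
  have hsq := hN k hk
  rw [Real.dist_eq, abs_of_nonneg (sub_nonneg.2 (hmono hk))] at hsq
  rw [dist_eq_norm]
  exact lt_of_pow_lt_pow_left₀ 2 hε.le ((hx N k hk).trans_lt hsq)

theorem exists_mem_iInter_of_antitone_of_convex {F : Type*} [NormedAddCommGroup F]
    [InnerProductSpace ℝ F] [CompleteSpace F] {S : ℕ → Set F} (hS : Antitone S)
    (hne : ∀ n, (S n).Nonempty) (hclosed : ∀ n, IsClosed (S n)) (hconv : ∀ n, Convex ℝ (S n))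
    (hbdd : Bornology.IsBounded (S 0)) : (⋂ n, S n).Nonempty := by
  choose m hm hmin using fun n =>
    exists_norm_eq_iInf_of_complete_convex (hne n) (hclosed n).isComplete (hconv n) 0
  have hstep : ∀ n k, n ≤ k → ‖m k - m n‖ ^ 2 ≤ ‖m k‖ ^ 2 - ‖m n‖ ^ 2 := by
    intro n k hnk
    have hproj := (norm_eq_iInf_iff_real_inner_le_zero (hconv n) (hm n)).1 (hmin n) (m k)
      (hS hnk (hm k))
    rw [zero_sub, inner_neg_left, inner_sub_right, real_inner_self_eq_norm_sq] at hproj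
    rw [norm_sub_sq_real, real_inner_comm]
    linarith
  obtain ⟨M, hM⟩ := hbdd.exists_norm_le
  obtain ⟨x, hx⟩ := cauchySeq_tendsto_of_complete
    (cauchySeq_of_norm_sub_sq_le (fun n => hM _ (hS (Nat.zero_le n) (hm n))) hstep)
  refine ⟨x, Set.mem_iInter.2 fun n => (hclosed n).mem_of_tendsto hx ?_⟩
  exact eventually_atTop.2 ⟨n, fun k hk => hS hk (hm k)⟩

theorem ContinuousLinearMap.isClosed_image_closedBall {F E : Type*} [NormedAddCommGroup F]
    [InnerProductSpace ℝ F] [CompleteSpace F] [NormedAddCommGroup E] [NormedSpace ℝ E]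
    (T : F →L[ℝ] E) (r : ℝ) : IsClosed (T '' closedBall 0 r) := by
  refine isClosed_of_closure_subset fun v hv => ?_
  let S : ℕ → Set F := fun n => closedBall 0 r ∩ T ⁻¹' closedBall v (1 / (n + 1))
  have hS : Antitone S := fun n k hnk =>
    Set.inter_subset_inter_right _ <| Set.preimage_mono <| closedBall_subset_closedBall <|
      Nat.one_div_le_one_div hnk
  have hne : ∀ n, (S n).Nonempty := fun n => by
    obtain ⟨_, ⟨x, hx, rfl⟩, hdist⟩ := mem_closure_iff.1 hv _ Nat.one_div_pos_of_nat
    exact ⟨x, hx, mem_closedBall'.2 hdist.le⟩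
  obtain ⟨x, hx⟩ := exists_mem_iInter_of_antitone_of_convex hS hne
    (fun n => isClosed_closedBall.inter (isClosed_closedBall.preimage T.continuous))
    (fun n => (convex_closedBall 0 r).inter ((convex_closedBall v _).linear_preimage T.toLinearMap))
    (isBounded_closedBall.subset Set.inter_subset_left)
  rw [Set.mem_iInter] at hx
  refine ⟨x, (hx 0).1, eq_of_forall_dist_le fun ε hε => ?_⟩
  obtain ⟨n, hn⟩ := exists_nat_one_div_lt hε
  exact ((hx n).2 : dist (T x) v ≤ 1 / (n + 1)).trans hn.le

theorem ContinuousLinearMap.exists_one_sub_apply_eq {𝕜 E : Type*} [NontriviallyNormedField 𝕜]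
    [NormedAddCommGroup E] [NormedSpace 𝕜 E] [CompleteSpace E] (A : E →L[𝕜] E) (hA : ‖A‖ < 1)
    (u : E) : ∃ x, (1 - A) x = u :=
  ⟨(↑(Units.oneSub A hA)⁻¹ : E →L[𝕜] E) u, by
    rw [← Units.val_oneSub A hA, ← mul_apply_eq_comp, Units.mul_inv]
    rfl⟩

theorem eventually_exists_one_sub_smul_apply_eq {E : Type*} [NormedAddCommGroup E]
    [NormedSpace ℂ E] [CompleteSpace E] (G : E →L[ℂ] E) {κ : ℝ} (hκ : 0 < κ) (hG : ‖G‖ ≤ 1 / κ)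
    (u : E) : ∀ᶠ n : ℕ in atTop, ∃ x, (1 - ((κ - 1 / (n + 1) : ℝ) : ℂ) • G) x = u := by
  filter_upwards [tendsto_one_div_add_atTop_nhds_zero_nat.eventually (gt_mem_nhds hκ)]
    with n hn
  have hpos : 0 < κ - 1 / (n + 1) := sub_pos.2 hn
  refine ContinuousLinearMap.exists_one_sub_apply_eq _ ?_ u
  calc ‖((κ - 1 / (n + 1) : ℝ) : ℂ) • G‖ = (κ - 1 / (n + 1)) * ‖G‖ := by
        rw [norm_smul, Complex.norm_real, Real.norm_of_nonneg hpos.le]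
    _ ≤ (κ - 1 / (n + 1)) * (1 / κ) := by gcongr
    _ < κ * (1 / κ) := by gcongr; exact sub_lt_self κ Nat.one_div_pos_of_nat
    _ = 1 := mul_one_div_cancel hκ.ne'

theorem mem_closure_image_closedBall_one_sub_smul {E : Type*} [NormedAddCommGroup E]
    [NormedSpace ℂ E] [CompleteSpace E] (G : E →L[ℂ] E) {κ : ℝ} (hκ : 0 < κ) (hG : ‖G‖ ≤ 1 / κ)
    {u : E} {M : ℝ} (hM : ∀ n : ℕ, ∀ x : E, (1 - ((κ - 1 / (n + 1) : ℝ) : ℂ) • G) x = u → ‖x‖ ≤ M) :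
    u ∈ closure (((1 - (κ : ℂ) • G).restrictScalars ℝ) '' closedBall 0 M) := by
  obtain ⟨x, hx⟩ := (eventually_exists_one_sub_smul_apply_eq G hκ hG u).choice
  have happrox : ∀ᶠ n : ℕ in atTop,
      (1 - (κ : ℂ) • G) (x n) = u - ((1 / (n + 1) : ℝ) : ℂ) • G (x n) :=
    hx.mono fun n hn => by
      rw [← hn]
      simp only [sub_apply, smul_apply, one_apply_eq_self, Complex.ofReal_sub, sub_smul]
      abel
  have hxM : ∀ᶠ n : ℕ in atTop, ‖x n‖ ≤ M := hx.mono fun n hn => hM n _ hn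
  have hcoeff : Tendsto (fun n : ℕ => ((1 / (n + 1) : ℝ) : ℂ)) atTop (𝓝 0) := by
    simpa only [Complex.ofReal_zero, Function.comp_def] using
      (Complex.continuous_ofReal.tendsto 0).comp tendsto_one_div_add_atTop_nhds_zero_nat
  have hGx : IsBoundedUnder (· ≤ ·) atTop fun n => ‖G (x n)‖ :=
    isBoundedUnder_of_eventually_le <| hxM.mono fun n hn =>
      (G.le_opNorm _).trans (mul_le_mul_of_nonneg_left hn (norm_nonneg G))
  have hlim : Tendsto (fun n => (1 - (κ : ℂ) • G) (x n)) atTop (𝓝 u) := by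
    refine (tendsto_congr' happrox).2 ?_
    simpa using tendsto_const_nhds.sub (hcoeff.zero_smul_isBoundedUnder_le hGx)
  exact mem_closure_of_tendsto hlim <|
    hxM.mono fun n hn => ⟨x n, mem_closedBall_zero_iff.2 hn, rfl⟩

theorem bounded_resolvents_imp_range_general
    {H : Type*} [NormedAddCommGroup H] [InnerProductSpace ℂ H] [CompleteSpace H]
    (G : H →L[ℂ] H)
    (κ : ℝ) (hκ : 0 < κ)
    (hnorm : ‖G‖ = 1 / κ)
    (u : H)
    (hbdd : ∃ M : ℝ, ∀ n : ℕ, ∀ x : H,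
      ((1 : H →L[ℂ] H) - ((κ - 1 / (n + 1) : ℝ) : ℂ) • G) x = u → ‖x‖ ≤ M) :
    ∃ x : H, ((1 : H →L[ℂ] H) - (κ : ℂ) • G) x = u := by
  let _ : InnerProductSpace ℝ H := InnerProductSpace.complexToReal
  obtain ⟨M, hM⟩ := hbdd
  have hu := mem_closure_image_closedBall_one_sub_smul G hκ hnorm.le hM
  have hclosed := (((1 : H →L[ℂ] H) - (κ : ℂ) • G).restrictScalars ℝ).isClosed_image_closedBall M
  obtain ⟨x, -, hx⟩ := hclosed.closure_subset hu
  exact ⟨x, hx⟩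

/-- Lemma 4.6: if the family `xₙ = (I - (κ - 1/n)G)⁻¹ u` is bounded in norm, then
`u ∈ R(I - κG)`. -/
theorem bounded_resolvents_imp_range
    {H : Type*} [NormedAddCommGroup H] [InnerProductSpace ℂ H] [CompleteSpace H]
    (G : H →L[ℂ] H) (hG : IsSelfAdjoint G)
    (κ : ℝ) (hκ : 0 < κ)
    (hpos : ∃ α > 0, ∀ x : H, α * ‖x‖ ^ 2 ≤ (⟪G x, x⟫_ℂ).re)
    (hnorm : ‖G‖ = 1 / κ)
    (u : H)
    (hbdd : ∃ M : ℝ, ∀ n : ℕ, ∀ x : H,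
      ((1 : H →L[ℂ] H) - ((κ - 1 / (n + 1) : ℝ) : ℂ) • G) x = u → ‖x‖ ≤ M) :
    ∃ x : H, ((1 : H →L[ℂ] H) - (κ : ℂ) • G) x = u :=
  bounded_resolvents_imp_range_general G κ hκ hnorm u hbdd
end

section
/- Let H be a complex Hilbert space decomposed as H = H₊ ⊕ H₋ ⊕ N(G) for a bounded selfadjoint operator G, where G restricted to H₊ is a positive definite operator G₊ and G restricted to H₋ is −G₋ with G₋ positive definite, and ‖G₊‖ = ‖G₋‖ = 1/κ. If ker(I − κG) = {0} (equivalently N₊ = {0}), then there is no pair (y, γ) with γ ∈ [−κ, κ], ⟨Gy, y⟩ = 0, and (I + γG)y equal to a nonzero vector of H₋. Equivalently: if there exist y ∈ Q(G) and γ ∈ [−κ, κ] with (I + γG)y ∈ H₋ \ {0}, then ker(I − κG) ≠ {0}. -/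
open scoped InnerProductSpace

/-! Write `y = y₊ + y₋ + y₀` along `H₊ ⊕ H₋ ⊕ N(G)`. Both `H±` are `G`-invariant, so
`(I + γG)y ∈ H₋` forces `(I + γG)y₊ = 0` and `y₀ = 0`. Then
`0 = ⟪Gy, y⟫ = ⟪Gy₊, y₊⟫ + ⟪Gy₋, y₋⟫` with `y₋ ≠ 0`, so `⟪Gy₊, y₊⟫ > 0`: `y₊` is an
eigenvector of `G` for the eigenvalue `-1/γ > 0`, and `‖G₊‖ ≤ 1/κ` leaves only `γ = -κ`,
i.e. `y₊ ∈ ker (I - κG)`. -/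

section

variable {𝕜 E : Type*} [RCLike 𝕜] [NormedAddCommGroup E] [InnerProductSpace 𝕜 E]

namespace Submodule

theorem IsOrtho.eq_zero_of_add_mem {U V W : Submodule 𝕜 E} (hUV : U ⟂ V) (hUW : U ⟂ W)
    (hVW : V ⟂ W) {u w : E} (hu : u ∈ U) (hw : w ∈ W) (huw : u + w ∈ V) :
    u = 0 ∧ w = 0 := by
  have hu0 : u = 0 := by
    have h := hUV.inner_eq hu huw
    rwa [inner_add_right, hUW.inner_eq hu hw, add_zero, inner_self_eq_zero] at h
  rw [hu0, zero_add] at huw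
  exact ⟨hu0, disjoint_def.mp hVW.disjoint w huw hw⟩

end Submodule

theorem ContinuousLinearMap.norm_apply_le_of_mem_upperBounds {G : E →L[𝕜] E}
    {S : Submodule 𝕜 E} {M : ℝ} (hM : M ∈ upperBounds {r : ℝ | ∃ x ∈ S, ‖x‖ = 1 ∧ r = ‖G x‖})
    {x : E} (hx : x ∈ S) : ‖G x‖ ≤ M * ‖x‖ := by
  rcases eq_or_ne x 0 with rfl | hx0
  · simp
  have hn : 0 < ‖x‖ := norm_pos_iff.mpr hx0
  have hunit := hM ⟨(‖x‖⁻¹ : 𝕜) • x, S.smul_mem _ hx, norm_smul_inv_norm hx0, rfl⟩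
  rw [map_smul, norm_smul, norm_inv, RCLike.norm_ofReal, abs_of_pos hn] at hunit
  rwa [inv_mul_le_iff₀ hn, mul_comm] at hunit

theorem inner_apply_add_add_of_isOrtho {G : E →L[𝕜] E} {U V : Submodule 𝕜 E} (hUV : U ⟂ V)
    {u v : E} (hu : u ∈ U) (hv : v ∈ V) (hGu : G u ∈ U) (hGv : G v ∈ V) :
    ⟪G (u + v), u + v⟫_𝕜 = ⟪G u, u⟫_𝕜 + ⟪G v, v⟫_𝕜 := by
  rw [map_add, inner_add_left, inner_add_right, inner_add_right, hUV.inner_eq hGu hv,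
    hUV.symm.inner_eq hGv hu, add_zero, zero_add]

theorem eq_neg_of_add_smul_map_eq_zero {G : E →L[𝕜] E} {x : E} {γ κ : ℝ} (hκ : 0 < κ)
    (hγ : -κ ≤ γ) (hx : x + (γ : 𝕜) • G x = 0) (hpos : 0 < RCLike.re ⟪G x, x⟫_𝕜)
    (hnorm : ‖G x‖ ≤ 1 / κ * ‖x‖) : γ = -κ := by
  set y := G x
  have hx' : x = -((γ : 𝕜) • y) := eq_neg_of_add_eq_zero_left hx
  have hre : RCLike.re ⟪y, x⟫_𝕜 = -γ * ‖y‖ ^ 2 := by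
    rw [hx', inner_neg_right, inner_smul_right, inner_self_eq_norm_sq_to_K]
    simp only [map_neg, RCLike.re_ofReal_mul]
    norm_cast
    ring
  have hnx : ‖x‖ = |γ| * ‖y‖ := by
    rw [hx', norm_neg, norm_smul, RCLike.norm_ofReal]
  have hγneg : γ < 0 := by
    by_contra! h
    nlinarith [sq_nonneg ‖y‖]
  have hy : 0 < ‖y‖ := by
    refine (norm_nonneg y).lt_of_ne fun h => ?_
    rw [← h] at hre
    linarith
  rw [abs_of_neg hγneg] at hnx
  rw [hnx, ← mul_assoc, le_mul_iff_one_le_left hy, div_mul_eq_mul_div, one_mul,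
    le_div_iff₀ hκ] at hnorm
  linarith

end

theorem boundary_kernel_nontrivial_general
    {H : Type*} [NormedAddCommGroup H] [InnerProductSpace ℂ H]
    (G : H →L[ℂ] H) (κ : ℝ) (hκ : 0 < κ)
    (Hp Hm : Submodule ℂ H)
    (hpm : ∀ x ∈ Hp, ∀ y ∈ Hm, ⟪x, y⟫_ℂ = 0)
    (hp0 : ∀ x ∈ Hp, ∀ y ∈ LinearMap.ker (G : H →ₗ[ℂ] H), ⟪x, y⟫_ℂ = 0)
    (hm0 : ∀ x ∈ Hm, ∀ y ∈ LinearMap.ker (G : H →ₗ[ℂ] H), ⟪x, y⟫_ℂ = 0)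
    (hspan : ∀ x : H, ∃ xp ∈ Hp, ∃ xm ∈ Hm, ∃ x0 ∈ LinearMap.ker (G : H →ₗ[ℂ] H), x = xp + xm + x0)
    (hinvp : ∀ x ∈ Hp, G x ∈ Hp) (hinvm : ∀ x ∈ Hm, G x ∈ Hm)
    (hnegm : ∃ β > 0, ∀ x ∈ Hm, (⟪G x, x⟫_ℂ).re ≤ -(β * ‖x‖ ^ 2))
    (hnormp : IsLUB {r : ℝ | ∃ x ∈ Hp, ‖x‖ = 1 ∧ r = ‖G x‖} (1 / κ))
    (hex : ∃ y : H, ∃ γ ∈ Set.Icc (-κ) κ, ⟪G y, y⟫_ℂ = 0 ∧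
      ((1 : H →L[ℂ] H) + (γ : ℂ) • G) y ∈ Hm ∧ ((1 : H →L[ℂ] H) + (γ : ℂ) • G) y ≠ 0) :
    LinearMap.ker (((1 : H →L[ℂ] H) - (κ : ℂ) • G : H →L[ℂ] H) : H →ₗ[ℂ] H) ≠ ⊥ := by
  rw [← Submodule.isOrtho_iff_inner_eq] at hpm hp0 hm0
  obtain ⟨y, γ, hγ, hQ, hzm, hz0⟩ := hex
  obtain ⟨yp, hyp, ym, hym, y0, hy0, rfl⟩ := hspan y
  set T := (1 : H →L[ℂ] H) + (γ : ℂ) • G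
  have hGy0 : G y0 = 0 := hy0
  have hTy0 : T y0 = y0 := by simp [T, hGy0]
  have hTp : T yp ∈ Hp := Hp.add_mem hyp (Hp.smul_mem _ (hinvp yp hyp))
  have hTm : T ym ∈ Hm := Hm.add_mem hym (Hm.smul_mem _ (hinvm ym hym))
  obtain ⟨hTyp, rfl⟩ : T yp = 0 ∧ y0 = 0 := hpm.eq_zero_of_add_mem hp0 hm0 hTp hy0 (by
    simpa [map_add, hTy0, add_right_comm] using Hm.sub_mem hzm hTm)
  have hym0 : ym ≠ 0 := by
    rintro rfl
    exact hz0 (by simpa using hTyp)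
  obtain ⟨β, hβ, hβm⟩ := hnegm
  have hneg : (⟪G ym, ym⟫_ℂ).re < 0 := by
    have := mul_pos hβ (pow_pos (norm_pos_iff.mpr hym0) 2)
    linarith [hβm ym hym]
  have hpos : 0 < (⟪G yp, yp⟫_ℂ).re := by
    have hsplit := congrArg Complex.re
      (inner_apply_add_add_of_isOrtho hpm hyp hym (hinvp yp hyp) (hinvm ym hym))
    rw [← add_zero (yp + ym), hQ, Complex.zero_re, Complex.add_re] at hsplit
    linarith
  have hγκ : γ = -κ := eq_neg_of_add_smul_map_eq_zero hκ hγ.1 hTyp hpos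
    (G.norm_apply_le_of_mem_upperBounds hnormp.1 hyp)
  refine (Submodule.ne_bot_iff _).mpr ⟨yp, ?_, ?_⟩
  · rw [LinearMap.mem_ker]
    simpa [T, hγκ, sub_eq_add_neg] using hTyp
  · rintro rfl
    simp at hpos

/-- Lemma 4.7 (one half): with the canonical decomposition `H = H₊ ⊕ H₋ ⊕ N(G)` of a
selfadjoint operator `G` (positive definite on `H₊`, negative definite on `H₋`, with
`‖G₊‖ = ‖G₋‖ = 1/κ`), if there exist `y ∈ Q(G)` and `γ ∈ [-κ, κ]` with
`(I + γG)y ∈ H₋ \ {0}`, then `N₊ = ker(I - κG) ≠ {0}`. -/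
theorem boundary_kernel_nontrivial
    {H : Type*} [NormedAddCommGroup H] [InnerProductSpace ℂ H] [CompleteSpace H]
    (G : H →L[ℂ] H) (hG : IsSelfAdjoint G) (κ : ℝ) (hκ : 0 < κ)
    (Hp Hm : Submodule ℂ H)
    (hpm : ∀ x ∈ Hp, ∀ y ∈ Hm, ⟪x, y⟫_ℂ = 0)
    (hp0 : ∀ x ∈ Hp, ∀ y ∈ LinearMap.ker (G : H →ₗ[ℂ] H), ⟪x, y⟫_ℂ = 0)
    (hm0 : ∀ x ∈ Hm, ∀ y ∈ LinearMap.ker (G : H →ₗ[ℂ] H), ⟪x, y⟫_ℂ = 0)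
    (hspan : ∀ x : H, ∃ xp ∈ Hp, ∃ xm ∈ Hm, ∃ x0 ∈ LinearMap.ker (G : H →ₗ[ℂ] H), x = xp + xm + x0)
    (hinvp : ∀ x ∈ Hp, G x ∈ Hp) (hinvm : ∀ x ∈ Hm, G x ∈ Hm)
    (hposp : ∃ α > 0, ∀ x ∈ Hp, α * ‖x‖ ^ 2 ≤ (⟪G x, x⟫_ℂ).re)
    (hnegm : ∃ β > 0, ∀ x ∈ Hm, (⟪G x, x⟫_ℂ).re ≤ -(β * ‖x‖ ^ 2))
    (hnormp : IsLUB {r : ℝ | ∃ x ∈ Hp, ‖x‖ = 1 ∧ r = ‖G x‖} (1 / κ))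
    (hnormm : IsLUB {r : ℝ | ∃ x ∈ Hm, ‖x‖ = 1 ∧ r = ‖G x‖} (1 / κ))
    (hex : ∃ y : H, ∃ γ ∈ Set.Icc (-κ) κ, ⟪G y, y⟫_ℂ = 0 ∧
      ((1 : H →L[ℂ] H) + (γ : ℂ) • G) y ∈ Hm ∧ ((1 : H →L[ℂ] H) + (γ : ℂ) • G) y ≠ 0) :
    LinearMap.ker (((1 : H →L[ℂ] H) - (κ : ℂ) • G : H →L[ℂ] H) : H →ₗ[ℂ] H) ≠ ⊥ :=
  boundary_kernel_nontrivial_general G κ hκ Hp Hm hpm hp0 hm0 hspan hinvp hinvm hnegm hnormp hex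
end

section
/- Let H be a complex Hilbert space and A, B bounded selfadjoint operators such that ⟨Ax,x⟩ ≥ 0 for all x with ⟨Bx,x⟩ = 0, and suppose ρ₋ < ρ₊ where [ρ₋, ρ₊] is the interval of ρ for which A + ρB is positive semidefinite. Then for every ρ in the open interval (ρ₋, ρ₊), ker(A + ρB) = ker(A) ∩ ker(B). -/
/-!
For `x ∈ ker (A + ρB)` the form `ρ' ↦ re ⟪(A + ρ'B) x, x⟫ = (ρ' - ρ) re ⟪B x, x⟫` is nonnegative
at both endpoints `ρ₋ < ρ < ρ₊`, so `re ⟪B x, x⟫ = 0`. Hence the positive operator `A + ρ₊B`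
has vanishing form at `x`, which forces `(A + ρ₊B) x = (ρ₊ - ρ) B x = 0`, so `B x = 0 = A x`.
-/

open scoped InnerProductSpace

section

variable {𝕜 M : Type*} [Field 𝕜] [AddCommGroup M] [Module 𝕜 M]

theorem LinearMap.add_smul_apply_of_add_smul_apply_eq_zero {A B : M →ₗ[𝕜] M} {c : 𝕜} {x : M}
    (hx : (A + c • B) x = 0) (c' : 𝕜) : (A + c' • B) x = (c' - c) • B x := by
  rw [LinearMap.add_apply, LinearMap.smul_apply] at hx ⊢
  linear_combination (norm := module) hx

theorem LinearMap.inf_ker_le_ker_add_smul (A B : M →ₗ[𝕜] M) (c : 𝕜) :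
    LinearMap.ker A ⊓ LinearMap.ker B ≤ LinearMap.ker (A + c • B) := by
  rintro x ⟨hA, hB⟩
  simp_all

end

namespace ContinuousLinearMap

variable {H : Type*} [NormedAddCommGroup H] [InnerProductSpace ℂ H] [CompleteSpace H]

/-- Writing `T = S† S`, the form `⟪T x, x⟫` is `‖S x‖²`. -/
theorem IsPositive.apply_eq_zero_of_re_inner_eq_zero {T : H →L[ℂ] H} (hT : T.IsPositive)
    {x : H} (hx : (⟪T x, x⟫_ℂ).re = 0) : T x = 0 := by
  obtain ⟨S, rfl⟩ := CStarAlgebra.nonneg_iff_eq_star_mul_self.mp ((nonneg_iff_isPositive T).mpr hT)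
  have hSx : S x = 0 := by
    rw [star_eq_adjoint, mul_def, comp_apply, adjoint_inner_left] at hx
    exact (re_inner_self_nonpos (𝕜 := ℂ)).mp hx.le
  simp [hSx]

theorem isSelfAdjoint_add_ofReal_smul {A B : H →L[ℂ] H} (hA : IsSelfAdjoint A)
    (hB : IsSelfAdjoint B) (ρ : ℝ) : IsSelfAdjoint (A + (ρ : ℂ) • B) :=
  hA.add (IsSelfAdjoint.smul (Complex.conj_ofReal ρ) hB)

theorem ker_add_smul_le_inf_ker_of_isPositive {A B : H →L[ℂ] H} {ρm ρ ρp : ℝ}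
    (hm : (A + (ρm : ℂ) • B).IsPositive) (hp : (A + (ρp : ℂ) • B).IsPositive)
    (hρ : ρ ∈ Set.Ioo ρm ρp) :
    LinearMap.ker ((A + (ρ : ℂ) • B : H →L[ℂ] H) : H →ₗ[ℂ] H) ≤
      LinearMap.ker (A : H →ₗ[ℂ] H) ⊓ LinearMap.ker (B : H →ₗ[ℂ] H) := by
  intro x hx
  have happ (ρ' : ℝ) : (A + (ρ' : ℂ) • B) x = ((ρ' : ℂ) - ρ) • B x :=
    LinearMap.add_smul_apply_of_add_smul_apply_eq_zero (A := (A : H →ₗ[ℂ] H)) (B := B) hx _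
  have hform (ρ' : ℝ) : (⟪(A + (ρ' : ℂ) • B) x, x⟫_ℂ).re = (ρ' - ρ) * (⟪B x, x⟫_ℂ).re := by
    rw [happ, inner_smul_left]
    simp [Complex.mul_re]
  have hBxx : (⟪B x, x⟫_ℂ).re = 0 := by
    have h₁ : 0 ≤ (ρm - ρ) * (⟪B x, x⟫_ℂ).re := hform ρm ▸ hm.re_inner_nonneg_left x
    have h₂ : 0 ≤ (ρp - ρ) * (⟪B x, x⟫_ℂ).re := hform ρp ▸ hp.re_inner_nonneg_left x
    nlinarith [hρ.1, hρ.2]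
  have hBx : B x = 0 := by
    have hTx := hp.apply_eq_zero_of_re_inner_eq_zero (by rw [hform, hBxx, mul_zero])
    rw [happ] at hTx
    exact (smul_eq_zero.mp hTx).resolve_left (sub_ne_zero.mpr (by exact_mod_cast hρ.2.ne'))
  have hAx : A x = 0 := by simpa [hBx] using hx
  exact ⟨hAx, hBx⟩

end ContinuousLinearMap

theorem interior_kernel_eq_general
    {H : Type*} [NormedAddCommGroup H] [InnerProductSpace ℂ H] [CompleteSpace H]
    (A B : H →L[ℂ] H) (hA : IsSelfAdjoint A) (hB : IsSelfAdjoint B)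
    (ρm ρp : ℝ)
    (hint : ∀ ρ : ℝ,
      (∀ x : H, 0 ≤ (⟪(A + (ρ : ℂ) • B) x, x⟫_ℂ).re) ↔ ρ ∈ Set.Icc ρm ρp) :
    ∀ ρ ∈ Set.Ioo ρm ρp,
      LinearMap.ker ((A + (ρ : ℂ) • B : H →L[ℂ] H) : H →ₗ[ℂ] H) =
        LinearMap.ker (A : H →ₗ[ℂ] H) ⊓ LinearMap.ker (B : H →ₗ[ℂ] H) := by
  intro ρ hρ
  have hpos (ρ' : ℝ) (h : ρ' ∈ Set.Icc ρm ρp) : (A + (ρ' : ℂ) • B).IsPositive :=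
    ContinuousLinearMap.isPositive_def'.mpr
      ⟨ContinuousLinearMap.isSelfAdjoint_add_ofReal_smul hA hB ρ', (hint ρ').mpr h⟩
  have hle : ρm ≤ ρp := hρ.1.le.trans hρ.2.le
  exact le_antisymm
    (ContinuousLinearMap.ker_add_smul_le_inf_ker_of_isPositive
      (hpos ρm ⟨le_rfl, hle⟩) (hpos ρp ⟨hle, le_rfl⟩) hρ)
    (LinearMap.inf_ker_le_ker_add_smul (A : H →ₗ[ℂ] H) B ρ)

/-- Lemma 2.3 in operator form: if the set of `ρ` for which `A + ρB` is positive
semidefinite is a nondegenerate interval `[ρ₋, ρ₊]`, then for every interior `ρ`,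
`ker(A + ρB) = ker A ∩ ker B`. -/
theorem interior_kernel_eq
    {H : Type*} [NormedAddCommGroup H] [InnerProductSpace ℂ H] [CompleteSpace H]
    (A B : H →L[ℂ] H) (hA : IsSelfAdjoint A) (hB : IsSelfAdjoint B)
    (hmap : ∀ x : H, ⟪B x, x⟫_ℂ = 0 → 0 ≤ (⟪A x, x⟫_ℂ).re)
    (ρm ρp : ℝ) (hlt : ρm < ρp)
    (hint : ∀ ρ : ℝ,
      (∀ x : H, 0 ≤ (⟪(A + (ρ : ℂ) • B) x, x⟫_ℂ).re) ↔ ρ ∈ Set.Icc ρm ρp) :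
    ∀ ρ ∈ Set.Ioo ρm ρp,
      LinearMap.ker ((A + (ρ : ℂ) • B : H →L[ℂ] H) : H →ₗ[ℂ] H) =
        LinearMap.ker (A : H →ₗ[ℂ] H) ⊓ LinearMap.ker (B : H →ₗ[ℂ] H) :=
  interior_kernel_eq_general A B hA hB ρm ρp hint
end

section
/- Let H be a complex Hilbert space and B a bounded selfadjoint indefinite operator on H (there exist x₊, x₋ with ⟨Bx₊, x₊⟩ > 0 > ⟨Bx₋, x₋⟩). Then the convex hull of the set C_B = {x ∈ H : ⟨Bx, x⟩ = 0} equals all of H. -/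
open scoped InnerProductSpace

section Aux

variable {H : Type*} [NormedAddCommGroup H] [InnerProductSpace ℂ H] [CompleteSpace H]

private lemma quad_expand (B : H →L[ℂ] H) (hB : IsSelfAdjoint B) (v w : H) (t : ℝ) :
    (⟪B (v + t • w), v + t • w⟫_ℂ).re =
      (⟪B w, w⟫_ℂ).re * t ^ 2 + 2 * (⟪B v, w⟫_ℂ).re * t + (⟪B v, v⟫_ℂ).re := by
  have hmap : B (v + t • w) = B v + t • B w := by
    rw [map_add, ContinuousLinearMap.map_smul_of_tower]
  have hsmul : ∀ x y : H, ⟪(t : ℝ) • x, y⟫_ℂ = (t : ℂ) * ⟪x, y⟫_ℂ := by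
    intro x y
    rw [show (t : ℝ) • x = (t : ℂ) • x from (Complex.coe_smul t x).symm, inner_smul_left]
    simp
  have hsmulr : ∀ x y : H, ⟪x, (t : ℝ) • y⟫_ℂ = (t : ℂ) * ⟪x, y⟫_ℂ := by
    intro x y
    rw [show (t : ℝ) • y = (t : ℂ) • y from (Complex.coe_smul t y).symm, inner_smul_right]
  have hsym : (⟪B w, v⟫_ℂ).re = (⟪B v, w⟫_ℂ).re := by
    have h : ⟪B w, v⟫_ℂ = ⟪w, B v⟫_ℂ := hB.isSymmetric w v
    rw [h]
    exact inner_re_symm (𝕜 := ℂ) w (B v)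
  rw [hmap, inner_add_left, inner_add_right, inner_add_right, hsmul, hsmul, hsmulr, hsmulr]
  simp only [Complex.add_re, Complex.mul_re, Complex.ofReal_re, Complex.ofReal_im]
  rw [hsym] at *
  ring

private lemma mem_hull_of_opposite (B : H →L[ℂ] H) (hB : IsSelfAdjoint B) (v w : H)
    (hv : 0 < (⟪B v, v⟫_ℂ).re) (hw : (⟪B w, w⟫_ℂ).re < 0) :
    v ∈ convexHull ℝ {x : H | (⟪B x, x⟫_ℂ).re = 0} := by
  set a : ℝ := (⟪B w, w⟫_ℂ).re with ha
  set b : ℝ := (⟪B v, w⟫_ℂ).re with hb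
  set c : ℝ := (⟪B v, v⟫_ℂ).re with hc
  have hane : a ≠ 0 := ne_of_lt hw
  have hdisc : 0 ≤ b ^ 2 - a * c := by nlinarith
  set s : ℝ := Real.sqrt (b ^ 2 - a * c) with hsdef
  have hs : s ^ 2 = b ^ 2 - a * c := Real.sq_sqrt hdisc
  set t₁ : ℝ := (-b + s) / a with ht1
  set t₂ : ℝ := (-b - s) / a with ht2
  have hroot : ∀ t : ℝ, a * t ^ 2 + 2 * b * t + c = 0 →
      (v + t • w) ∈ {x : H | (⟪B x, x⟫_ℂ).re = 0} := by
    intro t htroot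
    simp only [Set.mem_setOf_eq, quad_expand B hB v w t, ← ha, ← hb, ← hc]
    linarith [htroot]
  have expand : ∀ u : ℝ, a * (u / a) ^ 2 + 2 * b * (u / a) + c
      = (u ^ 2 + 2 * b * u + a * c) / a := by
    intro u; field_simp
  have hr1 : a * t₁ ^ 2 + 2 * b * t₁ + c = 0 := by
    rw [ht1, expand]
    have hnum : (-b + s) ^ 2 + 2 * b * (-b + s) + a * c = 0 := by linear_combination hs
    rw [hnum, zero_div]
  have hr2 : a * t₂ ^ 2 + 2 * b * t₂ + c = 0 := by
    rw [ht2, expand]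
    have hnum : (-b - s) ^ 2 + 2 * b * (-b - s) + a * c = 0 := by linear_combination hs
    rw [hnum, zero_div]
  have hprod : t₁ * t₂ < 0 := by
    have hnum : (-b + s) * (-b - s) = a * c := by linear_combination -hs
    have : t₁ * t₂ = c / a := by
      rw [ht1, ht2, div_mul_div_comm, hnum, mul_div_mul_left _ _ hane]
    rw [this]
    exact div_neg_of_pos_of_neg hv hw
  -- generic step: from roots t1 < 0 < t2, conclude
  have key : ∀ t1 t2 : ℝ, t1 < 0 → 0 < t2 →
      a * t1 ^ 2 + 2 * b * t1 + c = 0 → a * t2 ^ 2 + 2 * b * t2 + c = 0 →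
      v ∈ convexHull ℝ {x : H | (⟪B x, x⟫_ℂ).re = 0} := by
    intro t1 t2 h1 h2 hq1 hq2
    have hd : (0 : ℝ) < t2 - t1 := by linarith
    set α : ℝ := t2 / (t2 - t1) with hα
    set β : ℝ := -t1 / (t2 - t1) with hβ
    have hα0 : 0 ≤ α := le_of_lt (div_pos h2 hd)
    have hβ0 : 0 ≤ β := le_of_lt (div_pos (by linarith) hd)
    have habs : α + β = 1 := by rw [hα, hβ]; field_simp; ring
    have hcoef : α * t1 + β * t2 = 0 := by rw [hα, hβ]; field_simp; ring
    have hseg : α • (v + t1 • w) + β • (v + t2 • w) = v := by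
      have : α • (v + t1 • w) + β • (v + t2 • w)
          = (α + β) • v + (α * t1 + β * t2) • w := by
        module
      rw [this, habs, hcoef, one_smul, zero_smul, add_zero]
    exact segment_subset_convexHull (hroot t1 hq1) (hroot t2 hq2)
      ⟨α, β, hα0, hβ0, habs, hseg⟩
  rcases mul_neg_iff.mp hprod with ⟨h1, h2⟩ | ⟨h1, h2⟩
  · exact key t₂ t₁ h2 h1 hr2 hr1
  · exact key t₁ t₂ h1 h2 hr1 hr2

end Aux

/-- For an indefinite bounded selfadjoint operator `B`, the convex hull of the cone of
neutral vectors of the quadratic form `x ↦ ⟨Bx, x⟩` is the whole space. -/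
theorem convexHull_neutral_cone_eq_univ
    {H : Type*} [NormedAddCommGroup H] [InnerProductSpace ℂ H] [CompleteSpace H]
    (B : H →L[ℂ] H) (hB : IsSelfAdjoint B)
    (hBpos : ∃ x : H, 0 < (⟪B x, x⟫_ℂ).re)
    (hBneg : ∃ x : H, (⟪B x, x⟫_ℂ).re < 0) :
    convexHull ℝ {x : H | ⟪B x, x⟫_ℂ = 0} = Set.univ := by
  have hset : {x : H | ⟪B x, x⟫_ℂ = 0} = {x : H | (⟪B x, x⟫_ℂ).re = 0} := by
    ext x
    simp only [Set.mem_setOf_eq]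
    constructor
    · intro h; rw [h]; simp
    · intro h
      have hsym : (starRingEnd ℂ) ⟪B x, x⟫_ℂ = ⟪B x, x⟫_ℂ := by
        rw [inner_conj_symm]
        exact (hB.isSymmetric x x).symm
      have hre : ⟪B x, x⟫_ℂ = ((⟪B x, x⟫_ℂ).re : ℂ) := (Complex.conj_eq_iff_re.mp hsym).symm
      rw [hre, h, Complex.ofReal_zero]
  rw [hset]
  apply Set.eq_univ_of_forall
  intro v
  obtain ⟨p, hp⟩ := hBpos
  obtain ⟨n, hn⟩ := hBneg
  rcases lt_trichotomy ((⟪B v, v⟫_ℂ).re) 0 with h | h | h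
  · have := mem_hull_of_opposite (-B) (hB.neg) v p (by simpa using h) (by simpa using hp)
    have hneg : {x : H | (⟪(-B) x, x⟫_ℂ).re = 0} = {x : H | (⟪B x, x⟫_ℂ).re = 0} := by
      ext x; simp [neg_eq_zero]
    rwa [hneg] at this
  · exact subset_convexHull ℝ _ h
  · exact mem_hull_of_opposite B hB v n h hn
end

section
/- Let H be a complex Hilbert space, G a bounded selfadjoint operator with canonical decomposition H = H₊ ⊕ H₋ ⊕ N(G), G = G₊ ⊕ (−G₋) ⊕ 0 with G± positive definite and ‖G₊‖ = ‖G₋‖ = 1/κ, and assume N₋ = ker(I + κG) ≠ {0}. Let u₀ ∈ H with Gu₀ ≠ 0, and suppose the unique admissible multiplier γ equals κ, i.e. there exists y ∈ Q(G) with (I + κG)y = u₀. Then there exists α₋ ≥ 0 such that the full solution set {y ∈ Q(G) : (I + κG)y = u₀} equals (I + κG)† u₀ + α₋ · (N₋ ∩ S), where (I + κG)† is the Moore–Penrose inverse and S is the unit sphere of H. -/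
open scoped InnerProductSpace

/-!
On `N₋ = ker (I + κG)` the operator `G` acts as `-1/κ`, so for `y ⊥ N₋` and `w ∈ N₋`
selfadjointness gives `⟪G (w + y), w + y⟫ = ⟪G y, y⟫ - ‖w‖² / κ`. The solutions of
`(I + κG) y = u₀` form `y* + N₋`, where `y*` is the component orthogonal to `N₋` of the given
solution `y₁ + y*` in `Q(G)`; the constraint `⟪G y, y⟫ = 0` then cuts out the sphere of radius
`α₋ = ‖y₁‖` in `N₋`.
-/

theorem Module.End.apply_eq_neg_inv_smul_of_mem_ker_one_add_smul {R M : Type*} [Field R]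
    [AddCommGroup M] [Module R M] {f : Module.End R M} {c : R} (hc : c ≠ 0) {w : M}
    (hw : w ∈ LinearMap.ker (1 + c • f)) : f w = -c⁻¹ • w := by
  have hw : w + c • f w = 0 := hw
  calc f w = c⁻¹ • c • f w := (inv_smul_smul₀ hc _).symm
    _ = -c⁻¹ • w := by rw [eq_neg_of_add_eq_zero_right hw, smul_neg, neg_smul]

section Symmetric

variable {𝕜 H : Type*} [RCLike 𝕜] [NormedAddCommGroup H] [InnerProductSpace 𝕜 H]
  {T : H →ₗ[𝕜] H} {μ : ℝ} {w w' z : H}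

theorem LinearMap.IsSymmetric.inner_map_add_self_of_eigenvector (hT : T.IsSymmetric)
    (hw : T w = (μ : 𝕜) • w) (hwz : ⟪w, z⟫_𝕜 = 0) :
    ⟪T (w + z), w + z⟫_𝕜 = ⟪T z, z⟫_𝕜 + ((μ * ‖w‖ ^ 2 : ℝ) : 𝕜) := by
  have hzw : ⟪z, w⟫_𝕜 = 0 := inner_eq_zero_symm.mp hwz
  rw [map_add, inner_add_left, inner_add_right, inner_add_right, hT z w, hw, inner_smul_left,
    inner_smul_left, inner_smul_right, hwz, hzw, inner_self_eq_norm_sq_to_K, RCLike.conj_ofReal]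
  push_cast
  ring

theorem LinearMap.IsSymmetric.inner_map_add_self_eq_iff_norm_eq (hT : T.IsSymmetric) (hμ : μ ≠ 0)
    (hw : T w = (μ : 𝕜) • w) (hw' : T w' = (μ : 𝕜) • w') (hwz : ⟪w, z⟫_𝕜 = 0)
    (hw'z : ⟪w', z⟫_𝕜 = 0) :
    ⟪T (w + z), w + z⟫_𝕜 = ⟪T (w' + z), w' + z⟫_𝕜 ↔ ‖w‖ = ‖w'‖ := by
  rw [hT.inner_map_add_self_of_eigenvector hw hwz, hT.inner_map_add_self_of_eigenvector hw' hw'z,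
    add_right_inj, RCLike.ofReal_inj, mul_right_inj' hμ, sq_eq_sq₀ (norm_nonneg _) (norm_nonneg _)]

end Symmetric

theorem Submodule.exists_norm_eq_one_and_eq_smul_iff {𝕜 E : Type*} [RCLike 𝕜]
    [NormedAddCommGroup E] [NormedSpace 𝕜 E] {K : Submodule 𝕜 E} (hK : K ≠ ⊥) (a : 𝕜) (x : E) :
    (∃ v ∈ K, ‖v‖ = 1 ∧ x = a • v) ↔ x ∈ K ∧ ‖x‖ = ‖a‖ := by
  constructor
  · rintro ⟨v, hv, hv1, rfl⟩
    exact ⟨K.smul_mem a hv, by rw [norm_smul, hv1, mul_one]⟩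
  · rintro ⟨hx, hxa⟩
    rcases eq_or_ne a 0 with rfl | ha
    · obtain ⟨v, hv, hv0⟩ := Submodule.exists_mem_ne_zero_of_ne_bot hK
      refine ⟨(‖v‖⁻¹ : 𝕜) • v, K.smul_mem _ hv, norm_smul_inv_norm hv0, ?_⟩
      rw [zero_smul, ← norm_eq_zero, hxa, norm_zero]
    · refine ⟨a⁻¹ • x, K.smul_mem _ hx, ?_, by rw [smul_inv_smul₀ ha]⟩
      rw [norm_smul, norm_inv, hxa, inv_mul_cancel₀ (norm_ne_zero_iff.mpr ha)]

theorem boundary_solution_set_general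
    {H : Type*} [NormedAddCommGroup H] [InnerProductSpace ℂ H] [CompleteSpace H]
    (G : H →L[ℂ] H) (hG : IsSelfAdjoint G) (κ : ℝ) (hκ : 0 < κ)
    (hNm : LinearMap.ker (((1 : H →L[ℂ] H) + (κ : ℂ) • G : H →L[ℂ] H) : H →ₗ[ℂ] H) ≠ ⊥)
    (u₀ : H)
    (hex : ∃ y : H, ⟪G y, y⟫_ℂ = 0 ∧ ((1 : H →L[ℂ] H) + (κ : ℂ) • G) y = u₀) :
    ∃ (ystar : H) (α : ℝ), 0 ≤ α ∧
      ystar ∈ (LinearMap.ker (((1 : H →L[ℂ] H) + (κ : ℂ) • G : H →L[ℂ] H) : H →ₗ[ℂ] H))ᗮ ∧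
      ((1 : H →L[ℂ] H) + (κ : ℂ) • G) ystar = u₀ ∧
      {y : H | ⟪G y, y⟫_ℂ = 0 ∧ ((1 : H →L[ℂ] H) + (κ : ℂ) • G) y = u₀}
        = {y : H | ∃ v ∈ LinearMap.ker (((1 : H →L[ℂ] H) + (κ : ℂ) • G : H →L[ℂ] H) : H →ₗ[ℂ] H),
            ‖v‖ = 1 ∧ y = ystar + (α : ℂ) • v} := by
  obtain ⟨y, hy, rfl⟩ := hex
  set T : H →L[ℂ] H := 1 + (κ : ℂ) • G
  set K := LinearMap.ker (T : H →ₗ[ℂ] H)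
  have : CompleteSpace K := (ContinuousLinearMap.isClosed_ker T).completeSpace_coe
  obtain ⟨y₁, hy₁, y₀, hy₀, rfl⟩ := K.exists_add_mem_mem_orthogonal y
  have hTy : T (y₁ + y₀) = T y₀ := by rw [map_add, show T y₁ = 0 from hy₁, zero_add]
  have hG_K : ∀ w ∈ K, G w = ((-κ⁻¹ : ℝ) : ℂ) • w := fun w hw => by
    push_cast
    exact Module.End.apply_eq_neg_inv_smul_of_mem_ker_one_add_smul (f := (G : H →ₗ[ℂ] H))
      (by exact_mod_cast hκ.ne') hw
  refine ⟨y₀, ‖y₁‖, norm_nonneg _, hy₀, hTy.symm, ?_⟩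
  ext x
  have hxK : T x = T (y₁ + y₀) ↔ x - y₀ ∈ K := by rw [hTy]; exact LinearMap.sub_mem_ker_iff.symm
  simp only [Set.mem_ofPred_eq, ← sub_eq_iff_eq_add', hxK,
    K.exists_norm_eq_one_and_eq_smul_iff hNm, Complex.norm_real, norm_norm]
  rw [and_comm]
  refine and_congr_right fun hw => ?_
  have hnorm := hG.isSymmetric.inner_map_add_self_eq_iff_norm_eq
    (neg_ne_zero.mpr (inv_ne_zero hκ.ne')) (hG_K _ hw) (hG_K _ hy₁)
    (K.inner_right_of_mem_orthogonal hw hy₀) (K.inner_right_of_mem_orthogonal hy₁ hy₀)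
  simpa only [sub_add_cancel, ContinuousLinearMap.coe_coe, hy] using hnorm

/-- Lemma 5.2 (ii): at the boundary multiplier `γ = κ`, the solution set
`{y ∈ Q(G) : (I + κG)y = u₀}` equals `(I + κG)† u₀ + α₋ · (N₋ ∩ S)` for some `α₋ ≥ 0`.
The Moore–Penrose inverse `(I + κG)† u₀` is characterized as the unique solution `y*` of
`(I + κG) y* = u₀` lying in `(ker(I + κG))ᗮ`. -/
theorem boundary_solution_set
    {H : Type*} [NormedAddCommGroup H] [InnerProductSpace ℂ H] [CompleteSpace H]
    (G : H →L[ℂ] H) (hG : IsSelfAdjoint G) (κ : ℝ) (hκ : 0 < κ)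
    (Hp Hm : Submodule ℂ H)
    (hpm : ∀ x ∈ Hp, ∀ y ∈ Hm, ⟪x, y⟫_ℂ = 0)
    (hp0 : ∀ x ∈ Hp, ∀ y ∈ LinearMap.ker (G : H →ₗ[ℂ] H), ⟪x, y⟫_ℂ = 0)
    (hm0 : ∀ x ∈ Hm, ∀ y ∈ LinearMap.ker (G : H →ₗ[ℂ] H), ⟪x, y⟫_ℂ = 0)
    (hspan : ∀ x : H, ∃ xp ∈ Hp, ∃ xm ∈ Hm, ∃ x0 ∈ LinearMap.ker (G : H →ₗ[ℂ] H), x = xp + xm + x0)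
    (hinvp : ∀ x ∈ Hp, G x ∈ Hp) (hinvm : ∀ x ∈ Hm, G x ∈ Hm)
    (hposp : ∃ α > 0, ∀ x ∈ Hp, α * ‖x‖ ^ 2 ≤ (⟪G x, x⟫_ℂ).re)
    (hnegm : ∃ β > 0, ∀ x ∈ Hm, (⟪G x, x⟫_ℂ).re ≤ -(β * ‖x‖ ^ 2))
    (hnormp : IsLUB {r : ℝ | ∃ x ∈ Hp, ‖x‖ = 1 ∧ r = ‖G x‖} (1 / κ))
    (hnormm : IsLUB {r : ℝ | ∃ x ∈ Hm, ‖x‖ = 1 ∧ r = ‖G x‖} (1 / κ))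
    (hNm : LinearMap.ker (((1 : H →L[ℂ] H) + (κ : ℂ) • G : H →L[ℂ] H) : H →ₗ[ℂ] H) ≠ ⊥)
    (u₀ : H) (hu : G u₀ ≠ 0)
    (hex : ∃ y : H, ⟪G y, y⟫_ℂ = 0 ∧ ((1 : H →L[ℂ] H) + (κ : ℂ) • G) y = u₀) :
    ∃ (ystar : H) (α : ℝ), 0 ≤ α ∧
      ystar ∈ (LinearMap.ker (((1 : H →L[ℂ] H) + (κ : ℂ) • G : H →L[ℂ] H) : H →ₗ[ℂ] H))ᗮ ∧
      ((1 : H →L[ℂ] H) + (κ : ℂ) • G) ystar = u₀ ∧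
      {y : H | ⟪G y, y⟫_ℂ = 0 ∧ ((1 : H →L[ℂ] H) + (κ : ℂ) • G) y = u₀}
        = {y : H | ∃ v ∈ LinearMap.ker (((1 : H →L[ℂ] H) + (κ : ℂ) • G : H →L[ℂ] H) : H →ₗ[ℂ] H),
            ‖v‖ = 1 ∧ y = ystar + (α : ℂ) • v} :=
  boundary_solution_set_general G hG κ hκ hNm u₀ hex
end
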